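/- For every positive integer n, the number of distinct diagrams of staircase tableaux of size n that use only the symbols α and β — i.e., the number of distinct sets of box positions that occur as the set of nonempty boxes of some staircase tableau of size n containing only α's and β's — equals n!. -/

import Mathlib

inductive SLetter : Type
  | A | B | G | D
deriving DecidableEq, Repr

instance : Fintype SLetter where
  elems := {SLetter.A, SLetter.B, SLetter.G, SLetter.D}
  complete := by intro x; cases x <;> decide

/-- A filling `T` of the staircase Young diagram of shape `(n, n-1, …, 1)`
(boxes `(i,j)` with `i + j < n`, row `i` from the top, column `j` from the left,
diagonal boxes those with `i + j + 1 = n`) is a staircase tableau if: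
boxes outside the shape are unused (empty); no diagonal box is empty;
all boxes to the left of a `β` or `δ` in its row are empty;
all boxes above an `α` or `γ` in its column are empty. -/
def IsStaircase (n : ℕ) (T : Fin n → Fin n → Option SLetter) : Prop :=
  (∀ i j : Fin n, n ≤ (i : ℕ) + (j : ℕ) → T i j = none) ∧
  (∀ i j : Fin n, (i : ℕ) + (j : ℕ) + 1 = n → T i j ≠ none) ∧
  (∀ i j j' : Fin n, j' < j → (T i j = some SLetter.B ∨ T i j = some SLetter.D) →
      T i j' = none) ∧
  (∀ i i' j : Fin n, i' < i → (T i j = some SLetter.A ∨ T i j = some SLetter.G) →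
      T i' j = none)

instance (n : ℕ) : DecidablePred (IsStaircase n) := fun T => by
  unfold IsStaircase; infer_instance

/-- The staircase tableaux of size `n`. -/
def StaircaseTableau (n : ℕ) : Type :=
  {T : Fin n → Fin n → Option SLetter // IsStaircase n T}

instance (n : ℕ) : Fintype (StaircaseTableau n) := Subtype.fintype _

instance (n : ℕ) : DecidableEq (StaircaseTableau n) := Subtype.instDecidableEq

/-- The number of boxes of `T` filled with the symbol `x`. -/
def countLetter (n : ℕ) (T : Fin n → Fin n → Option SLetter) (x : SLetter) : ℕ :=
  (Finset.univ.filter (fun p : Fin n × Fin n => T p.1 p.2 = some x)).card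

/-- The label of the nearest labeled box strictly to the right of `(i,j)` in row `i`. -/
def rightLabel (n : ℕ) (T : Fin n → Fin n → Option SLetter) (i j : Fin n) : Option SLetter :=
  List.findSome? (fun j' => T i j') ((List.finRange n).drop ((j : ℕ) + 1))

/-- The label of the nearest labeled box strictly below `(i,j)` in column `j`. -/
def belowLabel (n : ℕ) (T : Fin n → Fin n → Option SLetter) (i j : Fin n) : Option SLetter :=
  List.findSome? (fun i' => T i' j) ((List.finRange n).drop ((i : ℕ) + 1))

/-- Whether the (empty) box `(i,j)` receives a `q` in the weight of `T`:
an empty box seeing a `δ` to its right gets `q`; an empty box seeing an `α` or `γ` to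
its right and a `β` or `γ` below it gets `q`; all other (empty) boxes get `1`. -/
def boxQ (n : ℕ) (T : Fin n → Fin n → Option SLetter) (i j : Fin n) : Bool :=
  match T i j with
  | some _ => false
  | none =>
    match rightLabel n T i j, belowLabel n T i j with
    | some SLetter.D, _ => true
    | some SLetter.A, some SLetter.B => true
    | some SLetter.A, some SLetter.G => true
    | some SLetter.G, some SLetter.B => true
    | some SLetter.G, some SLetter.G => true
    | _, _ => false

/-- The exponent of `q` in the weight of `T`. -/
def qCount (n : ℕ) (T : Fin n → Fin n → Option SLetter) : ℕ :=
  (Finset.univ.filter (fun p : Fin n × Fin n => boxQ n T p.1 p.2 = true)).card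

/-- The type of `T`, as a word in `Fin n → Bool`, read off the diagonal boxes from
northeast (index `0`) to southwest (index `n-1`): `true` (a `•`) for each `α` or `δ`,
`false` (a `∘`) for each `β` or `γ`. -/
def typeWord (n : ℕ) (T : Fin n → Fin n → Option SLetter) : Fin n → Bool := fun i =>
  match T i ⟨n - 1 - (i : ℕ), by have := i.isLt; omega⟩ with
  | some SLetter.A => true
  | some SLetter.D => true
  | _ => false

/-- `t(T)`, the number of `•`'s in the type of `T`. -/
def bulletCount (n : ℕ) (T : Fin n → Fin n → Option SLetter) : ℕ :=
  (Finset.univ.filter (fun i : Fin n => typeWord n T i = true)).card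

/-- The weight of a staircase tableau: the product of all its labels, with each empty
box contributing `q` or `1` according to the rules (`u` is set to `1`). -/
def stWt {R : Type*} [CommSemiring R] (n : ℕ) (a b g d q : R)
    (T : Fin n → Fin n → Option SLetter) : R :=
  a ^ countLetter n T SLetter.A * b ^ countLetter n T SLetter.B *
    g ^ countLetter n T SLetter.G * d ^ countLetter n T SLetter.D * q ^ qCount n T

/-- The fugacity partition function `Z_n(y; α, β, γ, δ; q) = Σ_T wt(T) y^{t(T)}`,
summed over all staircase tableaux of size `n`. -/
def stZ (R : Type*) [CommSemiring R] (n : ℕ) (y a b g d q : R) : R :=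
  ∑ T : StaircaseTableau n, stWt n a b g d q T.val * y ^ bulletCount n T.val

/-- The generating polynomial `Z_σ(α, β, γ, δ; q)` of staircase tableaux of a given
type `σ` (encoded as a list of booleans, `true` = `•`, `false` = `∘`). -/
def stZw (R : Type*) [CommSemiring R] (w : List Bool) (a b g d q : R) : R :=
  ∑ T ∈ Finset.univ.filter
      (fun T : StaircaseTableau w.length => List.ofFn (typeWord w.length T.val) = w),
    stWt w.length a b g d q T.val


/-- The diagram of a staircase tableau: the set of positions of its nonempty boxes. -/
def stDiagram (n : ℕ) (T : Fin n → Fin n → Option SLetter) : Finset (Fin n × Fin n) :=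
  Finset.univ.filter (fun p : Fin n × Fin n => T p.1 p.2 ≠ none)

/-!
Label a box `β` when some box lies above it in its column and `α` otherwise: a set of boxes is
then the diagram of an `α`/`β` staircase tableau iff it contains the diagonal and no box having a
box to its left in its row has a box above it. Counting rows from the bottom, a diagram of size
`n + 1` is a diagram `D` of size `n` with a new top row consisting of the diagonal box and boxes
over a set `S` of free columns of `D` (columns none of whose boxes has a box to its left), and it
has `#free D - #S + 1` free columns, the new ones being the columns of `S` minus its leftmost one,
plus that one. Hence `∑_D x ^ #(free D) = x (x + 1) ⋯ (x + n - 1)`, and `x = 1` gives `n!`.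
-/

open Finset

namespace StaircaseDiagram

/-- Row `r` (counted from the bottom) consists of the boxes `(r, 0), …, (r, r)`. -/
def stair (n : ℕ) : Finset (ℕ × ℕ) :=
  (range n ×ˢ range n).filter fun p => p.2 ≤ p.1

theorem mem_stair {n : ℕ} {p : ℕ × ℕ} : p ∈ stair n ↔ p.2 ≤ p.1 ∧ p.1 < n := by
  simp only [stair, mem_filter, mem_product, mem_range]
  omega

theorem stair_mono {m n : ℕ} (h : m ≤ n) : stair m ⊆ stair n := fun p hp => by
  rw [mem_stair] at hp ⊢
  omega

def HasBoxLeft (D : Finset (ℕ × ℕ)) (p : ℕ × ℕ) : Prop :=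
  ∃ q ∈ D, q.1 = p.1 ∧ q.2 < p.2

theorem HasBoxLeft.mono {D E : Finset (ℕ × ℕ)} {p : ℕ × ℕ} (h : HasBoxLeft D p) (hDE : D ⊆ E) :
    HasBoxLeft E p :=
  let ⟨q, hq, hq'⟩ := h
  ⟨q, hDE hq, hq'⟩

structure IsDiagram (n : ℕ) (D : Finset (ℕ × ℕ)) : Prop where
  subset_stair : D ⊆ stair n
  diag_mem : ∀ r < n, (r, r) ∈ D
  not_mem_above : ∀ p ∈ D, HasBoxLeft D p → ∀ r, p.1 < r → (r, p.2) ∉ D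

open Classical in
noncomputable def diagrams (n : ℕ) : Finset (Finset (ℕ × ℕ)) :=
  (stair n).powerset.filter (IsDiagram n)

theorem mem_diagrams {n : ℕ} {D : Finset (ℕ × ℕ)} : D ∈ diagrams n ↔ IsDiagram n D := by
  simp only [diagrams, mem_filter, mem_powerset]
  exact and_iff_right_of_imp IsDiagram.subset_stair

theorem diagrams_zero : diagrams 0 = {∅} := by
  have h : IsDiagram 0 ∅ := ⟨empty_subset _, by simp, by simp⟩
  ext D
  rw [mem_diagrams, mem_singleton]
  refine ⟨fun hD => subset_empty.1 fun p hp => ?_, fun hD => hD ▸ h⟩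
  have := mem_stair.1 (hD.subset_stair hp)
  omega

open Classical in
/-- The columns over which a new top row may place boxes. -/
noncomputable def freeCols (n : ℕ) (D : Finset (ℕ × ℕ)) : Finset ℕ :=
  (range n).filter fun j => ∀ p ∈ D, p.2 = j → ¬ HasBoxLeft D p

theorem mem_freeCols {n j : ℕ} {D : Finset (ℕ × ℕ)} :
    j ∈ freeCols n D ↔ j < n ∧ ∀ p ∈ D, p.2 = j → ¬ HasBoxLeft D p := by
  simp [freeCols]

def addTopRow (n : ℕ) (D : Finset (ℕ × ℕ)) (S : Finset ℕ) : Finset (ℕ × ℕ) :=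
  D ∪ (insert n S).image (n, ·)

def lowerRows (n : ℕ) (D : Finset (ℕ × ℕ)) : Finset (ℕ × ℕ) :=
  D.filter fun p => p.1 < n

def topRowCols (n : ℕ) (D : Finset (ℕ × ℕ)) : Finset ℕ :=
  (range n).filter fun j => (n, j) ∈ D

section TopRow

variable {n : ℕ} {D : Finset (ℕ × ℕ)} {S : Finset ℕ}

theorem mem_addTopRow {p : ℕ × ℕ} :
    p ∈ addTopRow n D S ↔ p ∈ D ∨ p.1 = n ∧ p.2 ∈ insert n S := by
  simp only [addTopRow, mem_union, mem_image]
  constructor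
  · rintro (h | ⟨j, hj, rfl⟩)
    exacts [Or.inl h, Or.inr ⟨rfl, hj⟩]
  · rintro (h | ⟨h1, h2⟩)
    exacts [Or.inl h, Or.inr ⟨p.2, h2, Prod.ext h1.symm rfl⟩]

theorem hasBoxLeft_addTopRow_of_ne {p : ℕ × ℕ} (hp : p.1 ≠ n) :
    HasBoxLeft (addTopRow n D S) p ↔ HasBoxLeft D p := by
  refine ⟨fun ⟨q, hq, hq'⟩ => ⟨q, ?_, hq'⟩, fun h => h.mono subset_union_left⟩
  rcases mem_addTopRow.1 hq with hq | ⟨hqn, -⟩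
  · exact hq
  · exact absurd (hq'.1 ▸ hqn) hp

theorem hasBoxLeft_addTopRow_top (hD : D ⊆ stair n) {c : ℕ} (hc : c ≤ n) :
    HasBoxLeft (addTopRow n D S) (n, c) ↔ ∃ j ∈ S, j < c := by
  constructor
  · rintro ⟨q, hq, hq1, hq2⟩
    rcases mem_addTopRow.1 hq with hq | ⟨-, hqS⟩
    · have := mem_stair.1 (hD hq)
      simp only at hq1
      omega
    · rcases mem_insert.1 hqS with hqn | hqS
      · simp only at hq2
        omega
      · exact ⟨q.2, hqS, hq2⟩
  · rintro ⟨j, hj, hjc⟩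
    exact ⟨(n, j), mem_addTopRow.2 (Or.inr ⟨rfl, mem_insert_of_mem hj⟩), rfl, hjc⟩

theorem isDiagram_addTopRow (hD : IsDiagram n D) (hS : S ⊆ freeCols n D) :
    IsDiagram (n + 1) (addTopRow n D S) where
  subset_stair p hp := by
    rcases mem_addTopRow.1 hp with hp | ⟨hpn, hpS⟩
    · exact stair_mono n.le_succ (hD.subset_stair hp)
    · have : p.2 ≤ n := by
        rcases mem_insert.1 hpS with h | h
        · exact h.le
        · exact (mem_freeCols.1 (hS h)).1.le
      exact mem_stair.2 ⟨by omega, by omega⟩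
  diag_mem r hr := by
    rcases Nat.lt_succ_iff_lt_or_eq.1 hr with hr | rfl
    · exact mem_addTopRow.2 (Or.inl (hD.diag_mem r hr))
    · exact mem_addTopRow.2 (Or.inr ⟨rfl, mem_insert_self _ _⟩)
  not_mem_above p hp hleft r hr hrp := by
    rcases mem_addTopRow.1 hp with hp | ⟨hpn, -⟩
    · have hpD := mem_stair.1 (hD.subset_stair hp)
      have hleft' := (hasBoxLeft_addTopRow_of_ne (by omega)).1 hleft
      rcases mem_addTopRow.1 hrp with hrp | ⟨-, hpS⟩
      · exact hD.not_mem_above p hp hleft' r hr hrp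
      · rcases mem_insert.1 hpS with h | h
        · simp only at h
          omega
        · exact (mem_freeCols.1 (hS h)).2 p hp rfl hleft'
    · rcases mem_addTopRow.1 hrp with hrp | ⟨hrn, -⟩
      · have := mem_stair.1 (hD.subset_stair hrp)
        simp only at this
        omega
      · simp only at hrn
        omega

theorem isDiagram_lowerRows (hD : IsDiagram (n + 1) D) : IsDiagram n (lowerRows n D) where
  subset_stair p hp := by
    rw [lowerRows, mem_filter] at hp
    have := mem_stair.1 (hD.subset_stair hp.1)
    exact mem_stair.2 ⟨this.1, hp.2⟩
  diag_mem r hr := mem_filter.2 ⟨hD.diag_mem r (by omega), hr⟩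
  not_mem_above p hp hleft r hr hrp :=
    hD.not_mem_above p (mem_filter.1 hp).1 (hleft.mono (filter_subset _ _)) r hr
      (mem_filter.1 hrp).1

theorem topRowCols_subset_freeCols (hD : IsDiagram (n + 1) D) :
    topRowCols n D ⊆ freeCols n (lowerRows n D) := fun j hj => by
  rw [topRowCols, mem_filter, mem_range] at hj
  refine mem_freeCols.2 ⟨hj.1, fun p hp hpj hleft => ?_⟩
  rw [lowerRows, mem_filter] at hp
  exact hD.not_mem_above p hp.1 (hleft.mono (filter_subset _ _)) n hp.2 (hpj ▸ hj.2)

theorem addTopRow_lowerRows_topRowCols (hD : IsDiagram (n + 1) D) :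
    addTopRow n (lowerRows n D) (topRowCols n D) = D := by
  ext ⟨a, b⟩
  simp only [mem_addTopRow, lowerRows, topRowCols, mem_filter, mem_insert, mem_range]
  constructor
  · rintro (h | ⟨ha, hb | h⟩)
    · exact h.1
    · rw [ha, hb]
      exact hD.diag_mem n n.lt_succ_self
    · rw [ha]
      exact h.2
  · intro h
    have hab := mem_stair.1 (hD.subset_stair h)
    simp only at hab
    by_cases ha : a < n
    · exact Or.inl ⟨h, ha⟩
    · obtain rfl : a = n := by omega
      by_cases hb : b = a
      · exact Or.inr ⟨rfl, Or.inl hb⟩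
      · exact Or.inr ⟨rfl, Or.inr ⟨by omega, h⟩⟩

theorem lowerRows_addTopRow (hD : D ⊆ stair n) : lowerRows n (addTopRow n D S) = D := by
  ext p
  rw [lowerRows, mem_filter, mem_addTopRow]
  constructor
  · rintro ⟨h | ⟨h, -⟩, hp⟩
    · exact h
    · omega
  · exact fun h => ⟨Or.inl h, (mem_stair.1 (hD h)).2⟩

theorem topRowCols_addTopRow (hD : D ⊆ stair n) (hS : S ⊆ range n) :
    topRowCols n (addTopRow n D S) = S := by
  ext j
  rw [topRowCols, mem_filter, mem_range, mem_addTopRow, mem_insert]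
  constructor
  · rintro ⟨hj, h | ⟨-, h | h⟩⟩
    · have := mem_stair.1 (hD h)
      simp only at this
      omega
    · simp only at h
      omega
    · exact h
  · exact fun h => ⟨mem_range.1 (hS h), Or.inr ⟨rfl, Or.inr h⟩⟩

theorem mem_freeCols_addTopRow (hD : IsDiagram n D) (hS : S ⊆ freeCols n D) {j : ℕ} :
    j ∈ freeCols (n + 1) (addTopRow n D S) ↔
      (j ∈ freeCols n D ∨ j = n) ∧ (j ∈ insert n S → ∀ j' ∈ S, ¬ j' < j) := by
  have hrow : ∀ p ∈ D, p.1 ≠ n := fun p hp => (mem_stair.1 (hD.subset_stair hp)).2.ne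
  have hcol : ∀ p ∈ D, p.2 ≠ n := fun p hp => by
    have := mem_stair.1 (hD.subset_stair hp)
    omega
  have hSn : ∀ j ∈ insert n S, j ≤ n := by
    simp only [mem_insert, forall_eq_or_imp, le_refl, true_and]
    exact fun j hj => (mem_freeCols.1 (hS hj)).1.le
  have htop {j : ℕ} (hj : j ∈ insert n S) :
      ¬ HasBoxLeft (addTopRow n D S) (n, j) ↔ ∀ j' ∈ S, ¬ j' < j := by
    rw [hasBoxLeft_addTopRow_top hD.subset_stair (hSn j hj)]
    simp only [not_exists, not_and]
  simp only [mem_freeCols]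
  constructor
  · rintro ⟨hj, h⟩
    refine ⟨?_, fun hjS => (htop hjS).1 (h _ (mem_addTopRow.2 (Or.inr ⟨rfl, hjS⟩)) rfl)⟩
    by_cases hjn : j = n
    · exact Or.inr hjn
    · refine Or.inl ⟨by omega, fun p hp hpj hleft => h p (mem_addTopRow.2 (Or.inl hp)) hpj ?_⟩
      exact (hasBoxLeft_addTopRow_of_ne (hrow p hp)).2 hleft
  · rintro ⟨hj, hmin⟩
    refine ⟨by rcases hj with hj | hj <;> omega, fun p hp hpj => ?_⟩
    rcases mem_addTopRow.1 hp with hp | ⟨hpn, hpS⟩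
    · rw [hasBoxLeft_addTopRow_of_ne (hrow p hp)]
      rcases hj with hj | hj
      · exact hj.2 p hp hpj
      · exact absurd (hpj.trans hj) (hcol p hp)
    · rw [← hpj] at hmin
      rw [show p = (n, p.2) from Prod.ext hpn rfl]
      exact (htop hpS).2 (hmin hpS)

/-- The leftmost box of the new top row is the only one of its boxes without a box to its left. -/
theorem freeCols_addTopRow (hD : IsDiagram n D) (hS : S ⊆ freeCols n D) :
    freeCols (n + 1) (addTopRow n D S) =
      insert ((insert n S).min' (insert_nonempty n S)) (freeCols n D \ S) := by
  have hG : ∀ j ∈ freeCols n D, j < n := fun j hj => (mem_freeCols.1 hj).1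
  have hmin {j : ℕ} : j = (insert n S).min' (insert_nonempty n S) ↔
      j ∈ insert n S ∧ ∀ a ∈ insert n S, j ≤ a := by
    rw [eq_comm, ← (isLeast_min' _ _).isLeast_iff_eq]
    rfl
  ext j
  rw [mem_freeCols_addTopRow hD hS, Finset.mem_insert (s := freeCols n D \ S), hmin, mem_sdiff]
  simp only [mem_insert, forall_eq_or_imp, not_lt]
  by_cases hjS : j ∈ S
  · have hjG := hS hjS
    simp [hjS, hjG, (hG j hjG).le]
  · by_cases hjn : j = n
    · subst hjn
      have : j ∉ freeCols j D := fun h => (hG j h).false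
      simp [hjS, this]
    · simp [hjS, hjn]

theorem card_freeCols_addTopRow (hD : IsDiagram n D) (hS : S ⊆ freeCols n D) :
    #(freeCols (n + 1) (addTopRow n D S)) = #(freeCols n D) - #S + 1 := by
  rw [freeCols_addTopRow hD hS, card_insert_of_notMem, card_sdiff_of_subset hS]
  intro h
  have hn : n ∉ freeCols n D := fun h => (mem_freeCols.1 h).1.false
  rcases mem_insert.1 (min'_mem _ (insert_nonempty n S)) with hm | hm
  · rw [hm] at h
    exact hn (mem_sdiff.1 h).1
  · exact (mem_sdiff.1 h).2 hm

end TopRow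

theorem sum_diagrams_succ {M : Type*} [AddCommMonoid M] (n : ℕ) (f : Finset (ℕ × ℕ) → M) :
    ∑ D ∈ diagrams (n + 1), f D =
      ∑ D ∈ diagrams n, ∑ S ∈ (freeCols n D).powerset, f (addTopRow n D S) := by
  rw [sum_sigma']
  refine sum_nbij' (fun D => ⟨lowerRows n D, topRowCols n D⟩) (fun p => addTopRow n p.1 p.2)
    (fun D hD => ?_) (fun p hp => ?_) (fun D hD => ?_) (fun p hp => ?_) (fun D hD => ?_)
  · exact mem_sigma.2 ⟨mem_diagrams.2 (isDiagram_lowerRows (mem_diagrams.1 hD)),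
      mem_powerset.2 (topRowCols_subset_freeCols (mem_diagrams.1 hD))⟩
  · obtain ⟨hD, hS⟩ := mem_sigma.1 hp
    exact mem_diagrams.2 (isDiagram_addTopRow (mem_diagrams.1 hD) (mem_powerset.1 hS))
  · exact addTopRow_lowerRows_topRowCols (mem_diagrams.1 hD)
  · obtain ⟨hD, hS⟩ := mem_sigma.1 hp
    have hD := mem_diagrams.1 hD
    have hS : p.2 ⊆ range n := fun j hj => mem_range.2 (mem_freeCols.1 (mem_powerset.1 hS hj)).1
    simp only [lowerRows_addTopRow hD.subset_stair, topRowCols_addTopRow hD.subset_stair hS]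
  · rw [addTopRow_lowerRows_topRowCols (mem_diagrams.1 hD)]

theorem sum_pow_card_freeCols (n x : ℕ) :
    ∑ D ∈ diagrams n, x ^ #(freeCols n D) = x.ascFactorial n := by
  induction n generalizing x with
  | zero => simp [diagrams_zero, freeCols]
  | succ n ih =>
    have inner : ∀ D ∈ diagrams n, ∑ S ∈ (freeCols n D).powerset,
        x ^ #(freeCols (n + 1) (addTopRow n D S)) = x * (x + 1) ^ #(freeCols n D) := by
      intro D hD
      rw [add_comm x 1, ← sum_pow_mul_eq_add_pow, mul_sum]
      refine sum_congr rfl fun S hS => ?_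
      rw [card_freeCols_addTopRow (mem_diagrams.1 hD) (mem_powerset.1 hS), one_pow, one_mul,
        pow_succ, mul_comm]
    rw [sum_diagrams_succ, sum_congr rfl inner, ← mul_sum, ih, Nat.succ_ascFactorial,
      Nat.ascFactorial_succ]

theorem card_diagrams (n : ℕ) : #(diagrams n) = n.factorial := by
  simpa using sum_pow_card_freeCols n 1

def boxPos (n : ℕ) (p : Fin n × Fin n) : ℕ × ℕ := (n - 1 - p.1, p.2)

theorem boxPos_injective (n : ℕ) : Function.Injective (boxPos n) := by
  rintro ⟨⟨i, hi⟩, ⟨j, hj⟩⟩ ⟨⟨i', hi'⟩, ⟨j', hj'⟩⟩ h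
  simp only [boxPos, Prod.mk.injEq] at h
  obtain rfl : i = i' := by omega
  obtain rfl : j = j' := h.2
  rfl

theorem exists_boxPos_eq {n : ℕ} {q : ℕ × ℕ} (hq : q ∈ stair n) : ∃ p, boxPos n p = q := by
  have := mem_stair.1 hq
  exact ⟨(⟨n - 1 - q.1, by omega⟩, ⟨q.2, by omega⟩), Prod.ext (by simp [boxPos]; omega) rfl⟩

theorem countLetter_eq_zero_iff {n : ℕ} {T : Fin n → Fin n → Option SLetter} {x : SLetter} :
    countLetter n T x = 0 ↔ ∀ i j, T i j ≠ some x := by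
  simp [countLetter, filter_eq_empty_iff]

theorem isDiagram_image_stDiagram {n : ℕ} {T : Fin n → Fin n → Option SLetter}
    (hT : IsStaircase n T) (hG : ∀ i j, T i j ≠ some .G) (hD : ∀ i j, T i j ≠ some .D) :
    IsDiagram n ((stDiagram n T).image (boxPos n)) := by
  obtain ⟨hout, hdiag, hrow, hcol⟩ := hT
  have hmem {q : ℕ × ℕ} : q ∈ (stDiagram n T).image (boxPos n) ↔
      ∃ p : Fin n × Fin n, T p.1 p.2 ≠ none ∧ boxPos n p = q := by
    simp [stDiagram]
  constructor
  · intro q hq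
    obtain ⟨⟨i, j⟩, hne, rfl⟩ := hmem.1 hq
    have : (i : ℕ) + j < n := by
      by_contra h
      exact hne (hout i j (by omega))
    have := i.isLt
    exact mem_stair.2 (by simp only [boxPos]; omega)
  · intro r hr
    exact hmem.2 ⟨(⟨n - 1 - r, by omega⟩, ⟨r, hr⟩), hdiag _ _ (by simp; omega),
      Prod.ext (by simp [boxPos]; omega) rfl⟩
  · rintro q hq ⟨q', hq', hq1, hq2⟩ r hr hrq
    obtain ⟨⟨i, j⟩, hne, rfl⟩ := hmem.1 hq
    obtain ⟨⟨i', j'⟩, hne', rfl⟩ := hmem.1 hq'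
    obtain ⟨⟨i'', j''⟩, hne'', h''⟩ := hmem.1 hrq
    simp only [boxPos, Prod.mk.injEq] at hq1 hq2 hr h''
    have := i.isLt
    have := i'.isLt
    have := i''.isLt
    obtain rfl : i = i' := Fin.ext (by omega)
    obtain rfl : j = j'' := Fin.ext h''.2.symm
    have hA : T i j = some .A := by
      rcases hx : T i j with _ | x
      · exact absurd hx hne
      · cases x
        · rfl
        · exact absurd (hrow i j j' hq2 (Or.inl hx)) hne'
        · exact absurd hx (hG _ _)
        · exact absurd hx (hD _ _)
    exact hne'' (hcol i i'' j (by rw [Fin.lt_def]; omega) (Or.inl hA))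

open Classical in
noncomputable def abTableau (n : ℕ) (D : Finset (ℕ × ℕ)) (i j : Fin n) : Option SLetter :=
  if boxPos n (i, j) ∈ D then
    if ∃ r, n - 1 - (i : ℕ) < r ∧ (r, (j : ℕ)) ∈ D then some .B else some .A
  else none

section Labelling

variable {n : ℕ} {D : Finset (ℕ × ℕ)} {i j : Fin n}

theorem abTableau_eq_none : abTableau n D i j = none ↔ boxPos n (i, j) ∉ D := by
  unfold abTableau
  split_ifs <;> simp_all

theorem abTableau_eq_some_B :
    abTableau n D i j = some .B ↔
      boxPos n (i, j) ∈ D ∧ ∃ r, n - 1 - (i : ℕ) < r ∧ (r, (j : ℕ)) ∈ D := by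
  unfold abTableau
  split_ifs <;> simp_all

theorem abTableau_eq_some_A :
    abTableau n D i j = some .A ↔
      boxPos n (i, j) ∈ D ∧ ¬ ∃ r, n - 1 - (i : ℕ) < r ∧ (r, (j : ℕ)) ∈ D := by
  unfold abTableau
  split_ifs <;> simp_all

theorem abTableau_ne_some {x : SLetter} (hA : x ≠ .A) (hB : x ≠ .B) :
    abTableau n D i j ≠ some x := by
  unfold abTableau
  split_ifs <;> simp [hA.symm, hB.symm]

end Labelling

theorem isStaircase_abTableau {n : ℕ} {D : Finset (ℕ × ℕ)} (hD : IsDiagram n D) :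
    IsStaircase n (abTableau n D) := by
  refine ⟨fun i j hij => ?_, fun i j hij => ?_, fun i j j' hj' hBD => ?_,
    fun i i' j hi' hAG => ?_⟩
  · rw [abTableau_eq_none]
    intro h
    have := mem_stair.1 (hD.subset_stair h)
    simp only [boxPos] at this
    omega
  · rw [ne_eq, abTableau_eq_none, not_not]
    have hdiag : boxPos n (i, j) = ((j : ℕ), (j : ℕ)) := Prod.ext (by simp only [boxPos]; omega) rfl
    exact hdiag ▸ hD.diag_mem j j.isLt
  · rcases hBD with hB | hB
    · obtain ⟨hmem, r, hr, hrj⟩ := abTableau_eq_some_B.1 hB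
      rw [abTableau_eq_none]
      exact fun h => hD.not_mem_above _ hmem ⟨_, h, rfl, hj'⟩ r hr hrj
    · exact absurd hB (abTableau_ne_some (by decide) (by decide))
  · rcases hAG with hA | hA
    · obtain ⟨-, hno⟩ := abTableau_eq_some_A.1 hA
      rw [abTableau_eq_none]
      have := i.isLt
      exact fun h => hno ⟨n - 1 - i', by rw [Fin.lt_def] at hi'; omega, h⟩
    · exact absurd hA (abTableau_ne_some (by decide) (by decide))

theorem image_stDiagram_abTableau {n : ℕ} {D : Finset (ℕ × ℕ)} (hD : IsDiagram n D) :
    (stDiagram n (abTableau n D)).image (boxPos n) = D := by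
  ext q
  simp only [stDiagram, mem_image, mem_filter, mem_univ, true_and, ne_eq, abTableau_eq_none,
    not_not, Prod.mk.eta]
  constructor
  · rintro ⟨p, hp, rfl⟩
    exact hp
  · intro hq
    obtain ⟨p, rfl⟩ := exists_boxPos_eq (hD.subset_stair hq)
    exact ⟨p, hq, rfl⟩

theorem image_image_boxPos_stDiagram (n : ℕ) :
    ((univ.filter (fun T : StaircaseTableau n =>
        countLetter n T.val SLetter.G = 0 ∧ countLetter n T.val SLetter.D = 0)).image
      (fun T => stDiagram n T.val)).image (·.image (boxPos n)) = diagrams n := by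
  ext D
  simp only [mem_image, mem_filter, mem_univ, true_and, mem_diagrams, countLetter_eq_zero_iff]
  constructor
  · rintro ⟨-, ⟨T, ⟨hG, hD⟩, rfl⟩, rfl⟩
    exact isDiagram_image_stDiagram T.2 hG hD
  · intro hD
    exact ⟨_, ⟨⟨abTableau n D, isStaircase_abTableau hD⟩,
      ⟨fun _ _ => abTableau_ne_some (by decide) (by decide),
        fun _ _ => abTableau_ne_some (by decide) (by decide)⟩, rfl⟩,
      image_stDiagram_abTableau hD⟩

end StaircaseDiagram

theorem card_staircase_diagrams_general (n : ℕ) :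
    ((Finset.univ.filter (fun T : StaircaseTableau n =>
        countLetter n T.val SLetter.G = 0 ∧ countLetter n T.val SLetter.D = 0)).image
      (fun T => stDiagram n T.val)).card = n.factorial := by
  rw [← Finset.card_image_of_injective _
      (Finset.image_injective (StaircaseDiagram.boxPos_injective n)),
    StaircaseDiagram.image_image_boxPos_stDiagram, StaircaseDiagram.card_diagrams]

/-- For every positive integer `n`, the number of distinct diagrams of staircase tableaux
of size `n` using only the symbols `α` and `β` (i.e. distinct sets of nonempty box
positions occurring among staircase tableaux with no `γ` and no `δ`) equals `n!`. -/
theorem card_staircase_diagrams (n : ℕ) (hn : 1 ≤ n) :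
    ((Finset.univ.filter (fun T : StaircaseTableau n =>
        countLetter n T.val SLetter.G = 0 ∧ countLetter n T.val SLetter.D = 0)).image
      (fun T => stDiagram n T.val)).card = n.factorial :=
  card_staircase_diagrams_general n
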